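/- arXiv:0911.4109 — 5 statements merged into one kernel-verified Lean document; each statement's English description precedes it below -/
import Mathlib

section
/- Hemisphere cancellation for the Muskat kernels: For every $\overline{x} \in \mathbb{R}^3$, every radius $r > 0$, and every unit vector $n \in \mathbb{R}^3$, one has $\int_{\{\overline{y} : |\overline{y} - \overline{x}| = r,\ n \cdot (\overline{y} - \overline{x}) \ge 0\}} \frac{(x_1 - y_1)(x_3 - y_3)}{|\overline{x} - \overline{y}|^5}\, d\sigma(\overline{y}) = 0$ and $\int_{\{\overline{y} : |\overline{y} - \overline{x}| = r,\ n \cdot (\overline{y} - \overline{x}) \ge 0\}} \frac{2(x_3-y_3)^2 - (x_1-y_1)^2 - (x_2-y_2)^2}{|\overline{x} - \overline{y}|^5}\, d\sigma(\overline{y}) = 0$, where $\sigma$ is the surface measure on the sphere of radius $r$ centered at $\overline{x}$. -/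
open MeasureTheory Filter Topology Real Set
open scoped RealInnerProductSpace

noncomputable section

abbrev E3 := EuclideanSpace ℝ (Fin 3)

/-- The surface measure on the sphere of radius `r` centered at `c` in `ℝ³`, obtained from the
surface measure of the unit sphere by the scaling factor `r²` and the affine map `z ↦ c + r • z`. -/
def sphereSurfaceMeasure (c : E3) (r : ℝ) : Measure E3 :=
  ENNReal.ofReal (r ^ 2) •
    Measure.map (fun z : Metric.sphere (0 : E3) 1 => c + r • (z : E3)) volume.toSphere

/-!
Pushed forward to the ambient space, the surface measure of the unit sphere is invariant under
every linear isometry, since `Measure.toSphere` is defined through the Lebesgue measure of cones.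
Invariance under `x ↦ -x` shows that an even integrand has, on a closed hemisphere, half of its
integral over the whole sphere (the bounding great circle is null); invariance under reflecting
and transposing coordinates shows that the numerators `x₁x₃` and `2x₃² - x₁² - x₂²` have zero
integral over the sphere. Both kernels are such a quadratic form divided by `|x|⁵`, so on the
sphere of radius `r` they are `r⁻³` times their values on the unit sphere.
-/

open scoped Pointwise

lemma LinearEquiv.preimage_set_smul {R M N : Type*} [Semiring R] [AddCommMonoid M] [Module R M]
    [AddCommMonoid N] [Module R N] (e : M ≃ₗ[R] N) (S : Set R) (T : Set N) :
    e ⁻¹' (S • T) = S • e ⁻¹' T := by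
  rw [← e.image_symm_eq_preimage, ← e.image_symm_eq_preimage, ← image2_smul, ← image2_smul,
    image_image2_distrib_right fun a b => map_smul _ a b]

variable {E : Type*} [NormedAddCommGroup E] [InnerProductSpace ℝ E] [FiniteDimensional ℝ E]
  [MeasurableSpace E] [BorelSpace E]

variable (E) in
def unitSphereMeasure : Measure E :=
  (volume : Measure E).toSphere.map Subtype.val

lemma unitSphereMeasure_apply {s : Set E} (hs : MeasurableSet s) :
    unitSphereMeasure E s =
      Module.finrank ℝ E * volume (Ioo (0 : ℝ) 1 • (Metric.sphere 0 1 ∩ s)) := by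
  rw [unitSphereMeasure, Measure.map_apply measurable_subtype_coe hs,
    Measure.toSphere_apply' _ (measurable_subtype_coe hs), Subtype.image_preimage_coe]

lemma LinearIsometryEquiv.measurePreserving_unitSphereMeasure (e : E ≃ₗᵢ[ℝ] E) :
    MeasurePreserving e (unitSphereMeasure E) (unitSphereMeasure E) := by
  refine ⟨e.continuous.measurable, Measure.ext fun s hs => ?_⟩
  have hcone : Ioo (0 : ℝ) 1 • (Metric.sphere 0 1 ∩ e ⁻¹' s) =
      e ⁻¹' (Ioo (0 : ℝ) 1 • (Metric.sphere 0 1 ∩ s)) := by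
    rw [← e.coe_toLinearEquiv, e.toLinearEquiv.preimage_set_smul, preimage_inter,
      e.coe_toLinearEquiv, e.preimage_sphere, map_zero]
  rw [Measure.map_apply e.continuous.measurable hs, unitSphereMeasure_apply hs,
    unitSphereMeasure_apply (e.continuous.measurable hs), hcone,
    e.measurePreserving.measure_preimage_emb e.toHomeomorph.measurableEmbedding]

lemma ae_unitSphereMeasure_norm_eq_one : ∀ᵐ x ∂unitSphereMeasure E, ‖x‖ = 1 :=
  (ae_map_iff measurable_subtype_coe.aemeasurable
    (measurableSet_eq_fun measurable_norm measurable_const)).2 (.of_forall fun z => by simp)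

lemma Continuous.integrable_unitSphereMeasure {f : E → ℝ} (hf : Continuous f) :
    Integrable f (unitSphereMeasure E) :=
  (integrable_map_measure hf.aestronglyMeasurable measurable_subtype_coe.aemeasurable).2 <|
    (hf.comp continuous_subtype_val).integrable_of_hasCompactSupport (.of_compactSpace _)

lemma unitSphereMeasure_submodule_eq_zero {K : Submodule ℝ E} (hK : K ≠ ⊤) :
    unitSphereMeasure E K = 0 := by
  have hcone : Ioo (0 : ℝ) 1 • (Metric.sphere (0 : E) 1 ∩ K) ⊆ (K : Set E) := by
    rintro _ ⟨a, -, x, ⟨-, hx⟩, rfl⟩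
    exact K.smul_mem a hx
  rw [unitSphereMeasure_apply K.closed_of_finiteDimensional.measurableSet,
    measure_mono_null hcone (Measure.addHaar_submodule _ K hK), mul_zero]

lemma unitSphereMeasure_inner_eq_zero {n : E} (hn : n ≠ 0) :
    unitSphereMeasure E {x | ⟪n, x⟫ = 0} = 0 := by
  have hK : (ℝ ∙ n)ᗮ ≠ ⊤ := by
    rwa [Ne, Submodule.orthogonal_eq_top_iff, Submodule.span_singleton_eq_bot]
  convert unitSphereMeasure_submodule_eq_zero hK using 2
  ext x
  simp [Submodule.mem_orthogonal_singleton_iff_inner_right]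

theorem setIntegral_halfspace_unitSphereMeasure_of_even {f : E → ℝ}
    (hf : Integrable f (unitSphereMeasure E)) (heven : ∀ x, f (-x) = f x) {n : E} (hn : n ≠ 0) :
    ∫ x in {x | 0 ≤ ⟪n, x⟫}, f x ∂unitSphereMeasure E = (∫ x, f x ∂unitSphereMeasure E) / 2 := by
  set H : Set E := {x | 0 ≤ ⟪n, x⟫}
  have hH : MeasurableSet H := measurableSet_le measurable_const (by fun_prop)
  have hcompl : (Hᶜ : Set E) =ᵐ[unitSphereMeasure E] Neg.neg ⁻¹' H := by
    refine eventuallyEq_set.2 ?_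
    filter_upwards [measure_eq_zero_iff_ae_notMem.1 (unitSphereMeasure_inner_eq_zero hn)] with x hx
    simp only [H, mem_compl_iff, mem_preimage, mem_ofPred_eq, inner_neg_right, not_le] at hx ⊢
    constructor <;> intro h
    · linarith
    · exact lt_of_le_of_ne (by linarith) hx
  have hneg := (LinearIsometryEquiv.neg ℝ (E := E)).measurePreserving_unitSphereMeasure
  have hreflect : ∫ x in Hᶜ, f x ∂unitSphereMeasure E = ∫ x in H, f x ∂unitSphereMeasure E := by
    rw [setIntegral_congr_set hcompl,
      ← hneg.setIntegral_preimage_emb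
        (LinearIsometryEquiv.neg ℝ).toHomeomorph.measurableEmbedding f H]
    simp only [LinearIsometryEquiv.coe_neg, heven]
  have := integral_add_compl hH hf
  linarith

section EuclideanSpace

variable {ι : Type*} [Fintype ι]

lemma integral_coord_mul_coord_unitSphereMeasure [DecidableEq ι] {i j : ι} (hij : i ≠ j) :
    ∫ x, x i * x j ∂unitSphereMeasure (EuclideanSpace ℝ ι) = 0 := by
  let e : EuclideanSpace ℝ ι ≃ₗᵢ[ℝ] EuclideanSpace ℝ ι := LinearIsometryEquiv.piLpCongrRight 2
    (Function.update (fun _ => LinearIsometryEquiv.refl ℝ ℝ) j (LinearIsometryEquiv.neg ℝ))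
  have h := e.measurePreserving_unitSphereMeasure.integral_comp e.toHomeomorph.measurableEmbedding
    (fun x => x i * x j)
  simp only [e, LinearIsometryEquiv.piLpCongrRight_apply, Function.update_apply, hij, ↓reduceIte,
    LinearIsometryEquiv.coe_refl, id_eq, LinearIsometryEquiv.coe_neg, mul_neg, integral_neg] at h
  linarith

lemma integral_coord_sq_unitSphereMeasure (i j : ι) :
    ∫ x, x i ^ 2 ∂unitSphereMeasure (EuclideanSpace ℝ ι) =
      ∫ x, x j ^ 2 ∂unitSphereMeasure (EuclideanSpace ℝ ι) := by
  classical
  let e : EuclideanSpace ℝ ι ≃ₗᵢ[ℝ] EuclideanSpace ℝ ι :=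
    LinearIsometryEquiv.piLpCongrLeft 2 ℝ ℝ (Equiv.swap i j)
  have h := e.measurePreserving_unitSphereMeasure.integral_comp e.toHomeomorph.measurableEmbedding
    (fun x => x i ^ 2)
  simpa [e, LinearIsometryEquiv.piLpCongrLeft_apply] using h.symm

end EuclideanSpace

lemma sphereSurfaceMeasure_eq_map (c : E3) (r : ℝ) :
    sphereSurfaceMeasure c r =
      ENNReal.ofReal (r ^ 2) • (unitSphereMeasure E3).map (fun x => c + r • x) := by
  rw [sphereSurfaceMeasure, unitSphereMeasure, Measure.map_map (by fun_prop) measurable_subtype_coe]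
  rfl

lemma setIntegral_halfspace_sphereSurfaceMeasure (c : E3) {r : ℝ} (hr : 0 < r) (n : E3)
    (f : E3 → ℝ) :
    ∫ y in {y | 0 ≤ ⟪n, y - c⟫}, f y ∂sphereSurfaceMeasure c r =
      r ^ 2 * ∫ x in {x | 0 ≤ ⟪n, x⟫}, f (c + r • x) ∂unitSphereMeasure E3 := by
  have hemb : MeasurableEmbedding fun x : E3 => c + r • x :=
    ((Homeomorph.smulOfNeZero r hr.ne').trans (Homeomorph.addLeft c)).measurableEmbedding
  have hpre : (fun x : E3 => c + r • x) ⁻¹' {y | 0 ≤ ⟪n, y - c⟫} = {x | 0 ≤ ⟪n, x⟫} := by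
    ext x
    simp [inner_smul_right, mul_nonneg_iff_of_pos_left hr]
  rw [sphereSurfaceMeasure_eq_map, Measure.restrict_smul, integral_smul_measure,
    hemb.restrict_map, hemb.integral_map, hpre, ENNReal.toReal_ofReal (by positivity), smul_eq_mul]

theorem setIntegral_halfspace_sphereSurfaceMeasure_kernel_eq_zero (c : E3) {r : ℝ} (hr : 0 < r)
    {n : E3} (hn : n ≠ 0) {P : E3 → ℝ} (hP : Continuous P)
    (hhom : ∀ (a : ℝ) w, P (a • w) = a ^ 2 * P w) (hmean : ∫ x, P x ∂unitSphereMeasure E3 = 0) :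
    ∫ y in {y | 0 ≤ ⟪n, y - c⟫}, P (c - y) / ‖c - y‖ ^ 5 ∂sphereSurfaceMeasure c r = 0 := by
  have hsphere : ∀ x : E3, ‖x‖ = 1 →
      P (c - (c + r • x)) / ‖c - (c + r • x)‖ ^ 5 = r⁻¹ ^ 3 * P x := by
    intro x hx
    rw [sub_add_cancel_left, ← neg_smul, hhom, norm_smul, hx, Real.norm_eq_abs, abs_neg,
      abs_of_pos hr]
    field_simp
  have heven : ∀ x, P (-x) = P x := fun x => by simpa using hhom (-1) x
  rw [setIntegral_halfspace_sphereSurfaceMeasure c hr,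
    setIntegral_congr_ae (measurableSet_le measurable_const (by fun_prop))
      (ae_unitSphereMeasure_norm_eq_one.mono fun x hx _ => hsphere x hx),
    integral_const_mul,
    setIntegral_halfspace_unitSphereMeasure_of_even hP.integrable_unitSphereMeasure heven hn, hmean]
  simp

lemma integral_two_mul_sq_sub_sq_sub_sq_unitSphereMeasure :
    ∫ x : E3, 2 * x 2 ^ 2 - x 0 ^ 2 - x 1 ^ 2 ∂unitSphereMeasure E3 = 0 := by
  have hint : ∀ i : Fin 3, Integrable (fun x : E3 => x i ^ 2) (unitSphereMeasure E3) :=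
    fun i => Continuous.integrable_unitSphereMeasure (by fun_prop)
  rw [integral_sub (f := fun x : E3 => 2 * x 2 ^ 2 - x 0 ^ 2) (((hint 2).const_mul 2).sub (hint 0))
      (hint 1),
    integral_sub ((hint 2).const_mul 2) (hint 0), integral_const_mul,
    integral_coord_sq_unitSphereMeasure 0 2, integral_coord_sq_unitSphereMeasure 1 2]
  ring

/-- **Hemisphere cancellation for the Muskat kernels.**  For every center `x̄ ∈ ℝ³`, radius
`r > 0` and unit vector `n`, the kernels `(x₁-y₁)(x₃-y₃)/|x̄-ȳ|⁵` and
`(2(x₃-y₃)² - (x₁-y₁)² - (x₂-y₂)²)/|x̄-ȳ|⁵` have zero mean on the hemisphere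
`{ȳ : |ȳ-x̄| = r, n ⬝ (ȳ-x̄) ≥ 0}` with respect to the surface measure of the sphere. -/
theorem muskat_kernels_hemisphere_cancellation (xb : E3) (r : ℝ) (hr : 0 < r)
    (n : E3) (hn : ‖n‖ = 1) :
    (∫ yb in {yb : E3 | 0 ≤ ⟪n, yb - xb⟫},
        (xb 0 - yb 0) * (xb 2 - yb 2) / ‖xb - yb‖ ^ 5
        ∂(sphereSurfaceMeasure xb r)) = 0 ∧
    (∫ yb in {yb : E3 | 0 ≤ ⟪n, yb - xb⟫},
        (2 * (xb 2 - yb 2) ^ 2 - (xb 0 - yb 0) ^ 2 - (xb 1 - yb 1) ^ 2) / ‖xb - yb‖ ^ 5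
        ∂(sphereSurfaceMeasure xb r)) = 0 := by
  have hn0 : n ≠ 0 := norm_ne_zero_iff.1 (by simp [hn])
  refine ⟨setIntegral_halfspace_sphereSurfaceMeasure_kernel_eq_zero xb hr hn0
      (P := fun w => w 0 * w 2) (by fun_prop) (fun a w => ?_)
      (integral_coord_mul_coord_unitSphereMeasure (by decide)),
    setIntegral_halfspace_sphereSurfaceMeasure_kernel_eq_zero xb hr hn0
      (P := fun w => 2 * w 2 ^ 2 - w 0 ^ 2 - w 1 ^ 2) (by fun_prop) (fun a w => ?_)
      integral_two_mul_sq_sub_sq_sub_sq_unitSphereMeasure⟩ <;>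
  · simp only [PiLp.smul_apply, smul_eq_mul]
    ring
end
end

section
/- Far-field bound via the divergence theorem: Let $M > 0$ and let $f : \mathbb{R}^2 \to \mathbb{R}$ be continuously differentiable with $-M < f(y) < M$ for all $y$ and $\nabla f \in L^2(\mathbb{R}^2)$. Fix $\overline{x} = (x, x_3) \in \mathbb{R}^3$ with $|x_3| \le M$, and let $0 < L < R$. Set $U = \{(y, y_3) \in \mathbb{R}^3 : L \le |x - y| \le R,\ f(y) \le y_3 \le M\}$. Then there is a universal constant $C$ such that $\Big| \int_{U} \frac{(x_1 - y_1)(x_3 - y_3)}{|\overline{x} - \overline{y}|^5}\, d\overline{y} \Big| \le C \Big( \frac{\|\partial_{x_1} f\|_{L^2}}{L} + \frac{M}{L} + \frac{M}{R} \Big)$. -/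
/-!
On `U` the kernel is dominated by `|x - y|⁻³`: both `|x₁ - y₁|` and `|x₃ - y₃|` are at most
`|x̄ - ȳ|`, and `|x̄ - ȳ| ≥ |x - y|`. Since `f > -M`, `U` lies in the shell
`{L ≤ |x - y| ≤ R, |y₃| ≤ M}`, over which Fubini and polar coordinates give
`∫ |x - y|⁻³ = 2M · 2π (1/L - 1/R) ≤ 4π M / L`; so `C = 4π` works, without integrating by parts.
-/

open MeasureTheory Filter Topology Real Set
open scoped RealInnerProductSpace

noncomputable section

abbrev E2 := EuclideanSpace ℝ (Fin 2)
/-- The point `(x₁, x₂, c) ∈ ℝ³` built from `x = (x₁,x₂) ∈ ℝ²` and `c ∈ ℝ`. -/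
def bar3 (x : E2) (c : ℝ) : E3 := (WithLp.equiv 2 (Fin 3 → ℝ)).symm ![x 0, x 1, c]

/-- Projection of a point of `ℝ³` onto its first two coordinates. -/
def proj (z : E3) : E2 := (WithLp.equiv 2 (Fin 2 → ℝ)).symm ![z 0, z 1]

/-- The `L²(ℝ²)` norm of a function. -/
def l2norm (h : E2 → ℝ) : ℝ := (∫ x : E2, (h x) ^ 2) ^ (1 / 2 : ℝ)

@[fun_prop]
lemma continuous_proj : Continuous proj := by
  refine (PiLp.continuous_toLp 2 _).comp (continuous_pi fun j => ?_)
  fin_cases j <;> fun_prop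

lemma abs_mul_apply_div_norm_pow_five_le {ι : Type*} [Fintype ι] (v : EuclideanSpace ℝ ι)
    (i j : ι) : |v i * v j / ‖v‖ ^ 5| ≤ (‖v‖ ^ 3)⁻¹ := by
  rcases (norm_nonneg v).eq_or_lt with hv | hv
  · simp [← hv]
  have hi : |v i| ≤ ‖v‖ := PiLp.norm_apply_le v i
  have hj : |v j| ≤ ‖v‖ := PiLp.norm_apply_le v j
  calc |v i * v j / ‖v‖ ^ 5| = |v i| * |v j| / ‖v‖ ^ 5 := by
        rw [abs_div, abs_mul, abs_pow, abs_norm]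
    _ ≤ ‖v‖ * ‖v‖ / ‖v‖ ^ 5 := by gcongr
    _ = (‖v‖ ^ 3)⁻¹ := by field_simp

lemma norm_sub_proj_le_norm_sub_bar3 (x : E2) (x3 : ℝ) (z : E3) :
    ‖x - proj z‖ ≤ ‖bar3 x x3 - z‖ := by
  have h0 : (x - proj z) 0 = (bar3 x x3 - z) 0 := rfl
  have h1 : (x - proj z) 1 = (bar3 x x3 - z) 1 := rfl
  rw [EuclideanSpace.norm_eq, EuclideanSpace.norm_eq, Fin.sum_univ_two, Fin.sum_univ_three, h0, h1]
  exact Real.sqrt_le_sqrt (le_add_of_nonneg_right (sq_nonneg _))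

def splitLast : E3 ≃ᵐ ℝ × E2 :=
  (MeasurableEquiv.toLp 2 (Fin 3 → ℝ)).symm.trans
    ((MeasurableEquiv.piFinSuccAbove (fun _ => ℝ) 2).trans
      (MeasurableEquiv.prodCongr (MeasurableEquiv.refl ℝ) (MeasurableEquiv.toLp 2 (Fin 2 → ℝ))))

lemma splitLast_apply (z : E3) : splitLast z = (z 2, proj z) := by
  refine Prod.ext rfl (PiLp.ext fun j => ?_)
  fin_cases j <;> rfl

lemma measurePreserving_splitLast : MeasurePreserving splitLast := by
  refine (EuclideanSpace.volume_preserving_symm_measurableEquiv_toLp (Fin 3)).trans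
    ((volume_preserving_piFinSuccAbove (fun _ => ℝ) 2).trans ?_)
  rw [Measure.volume_eq_prod, Measure.volume_eq_prod]
  exact (MeasurePreserving.id volume).prod (PiLp.volume_preserving_toLp (Fin 2))

lemma integral_mul_proj (ψ : ℝ → ℝ) (g : E2 → ℝ) :
    ∫ z : E3, ψ (z 2) * g (proj z) = (∫ t, ψ t) * ∫ y, g y := by
  rw [← integral_prod_mul, ← Measure.volume_eq_prod,
    ← measurePreserving_splitLast.integral_comp splitLast.measurableEmbedding]
  simp only [splitLast_apply]

lemma MeasureTheory.Integrable.mul_proj {ψ : ℝ → ℝ} {g : E2 → ℝ} (hψ : Integrable ψ)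
    (hg : Integrable g) :
    Integrable fun z : E3 => ψ (z 2) * g (proj z) := by
  have h := (measurePreserving_splitLast.integrable_comp_emb splitLast.measurableEmbedding).2
    (Measure.volume_eq_prod ℝ E2 ▸ hψ.mul_prod hg)
  simpa only [Function.comp_def, splitLast_apply] using h

lemma integral_Icc_inv_sq {L R : ℝ} (hL : 0 < L) (hLR : L ≤ R) :
    ∫ r in Icc L R, (r ^ 2)⁻¹ = L⁻¹ - R⁻¹ := by
  have hpos : ∀ r ∈ uIcc L R, 0 < r := fun r hr => hL.trans_le (uIcc_of_le hLR ▸ hr).1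
  have hderiv : ∀ r ∈ uIcc L R, HasDerivAt (fun r : ℝ => -r⁻¹) (r ^ 2)⁻¹ r := by
    intro r hr
    simpa only [neg_neg] using (hasDerivAt_inv (hpos r hr).ne').fun_neg
  have hcont : ContinuousOn (fun r : ℝ => (r ^ 2)⁻¹) (uIcc L R) :=
    (continuousOn_pow 2).inv₀ fun r hr => pow_ne_zero 2 (hpos r hr).ne'
  rw [integral_Icc_eq_integral_Ioc, ← intervalIntegral.integral_of_le hLR,
    intervalIntegral.integral_eq_sub_of_hasDerivAt hderiv hcont.intervalIntegrable]
  ring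

lemma mul_indicator_Icc_inv_pow_three (L R r : ℝ) :
    r * (Icc L R).indicator (fun r => (r ^ 3)⁻¹) r =
      (Icc L R).indicator (fun r => (r ^ 2)⁻¹) r := by
  by_cases hr : r ∈ Icc L R
  · rw [indicator_of_mem hr, indicator_of_mem hr]
    rcases eq_or_ne r 0 with rfl | hr0
    · simp
    · field_simp
  · simp [hr]

lemma integral_indicator_Icc_inv_pow_three_norm {L R : ℝ} (hL : 0 < L) (hLR : L ≤ R) :
    ∫ y : E2, (Icc L R).indicator (fun r => (r ^ 3)⁻¹) ‖y‖ = 2 * π * (L⁻¹ - R⁻¹) := by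
  rw [integral_fun_norm_addHaar]
  simp only [finrank_euclideanSpace_fin, Nat.add_one_sub_one, pow_one, smul_eq_mul,
    mul_indicator_Icc_inv_pow_three]
  rw [setIntegral_indicator measurableSet_Icc,
    inter_eq_right.2 ((Icc_subset_Ioi_iff hLR).2 hL), integral_Icc_inv_sq hL hLR]
  simp only [measureReal_def, EuclideanSpace.volume_ball_fin_two, ENNReal.ofReal_one, one_pow,
    one_mul, ENNReal.toReal_ofReal pi_nonneg, nsmul_eq_mul, Nat.cast_ofNat]
  ring

lemma integrable_indicator_Icc_inv_pow_three_norm {L R : ℝ} (hL : 0 < L) :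
    Integrable fun y : E2 => (Icc L R).indicator (fun r => (r ^ 3)⁻¹) ‖y‖ := by
  rw [integrable_fun_norm_addHaar]
  simp only [finrank_euclideanSpace_fin, Nat.add_one_sub_one, pow_one, smul_eq_mul,
    mul_indicator_Icc_inv_pow_three]
  refine ((integrable_indicator_iff measurableSet_Icc).2 ?_).integrableOn
  exact ((continuousOn_pow 2).inv₀ fun r hr =>
    pow_ne_zero 2 (hL.trans_le hr.1).ne').integrableOn_Icc

lemma isClosed_setOf_annulus_above_graph {f : E2 → ℝ} (hf : Continuous f) (x : E2) (L R M : ℝ) :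
    IsClosed {z : E3 | L ≤ ‖x - proj z‖ ∧ ‖x - proj z‖ ≤ R ∧ f (proj z) ≤ z 2 ∧ z 2 ≤ M} := by
  simp only [ofPred_and]
  refine (isClosed_le ?_ ?_).inter ((isClosed_le ?_ ?_).inter
    ((isClosed_le ?_ ?_).inter (isClosed_le ?_ ?_))) <;> fun_prop

def shellKernel (x : E2) (M L R : ℝ) (z : E3) : ℝ :=
  (Icc (-M) M).indicator 1 (z 2) * (Icc L R).indicator (fun r => (r ^ 3)⁻¹) ‖x - proj z‖

section shellKernel

variable {x : E2} {M L R : ℝ}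

lemma shellKernel_nonneg (hL : 0 ≤ L) (z : E3) : 0 ≤ shellKernel x M L R z :=
  mul_nonneg (indicator_nonneg (fun _ _ => zero_le_one) _)
    (indicator_nonneg (fun r hr => by have := hL.trans hr.1; positivity) _)

lemma integrable_shellKernel (hL : 0 < L) : Integrable (shellKernel x M L R) :=
  ((integrable_indicator_iff measurableSet_Icc).2
    (integrableOn_const measure_Icc_lt_top.ne)).mul_proj
      ((integrable_indicator_Icc_inv_pow_three_norm hL).comp_sub_left x)

lemma integral_shellKernel (hM : 0 ≤ M) (hL : 0 < L) (hLR : L ≤ R) :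
    ∫ z, shellKernel x M L R z = 2 * M * (2 * π * (L⁻¹ - R⁻¹)) := by
  unfold shellKernel
  rw [integral_mul_proj _ fun y => (Icc L R).indicator (fun r => (r ^ 3)⁻¹) ‖x - y‖,
    integral_sub_left_eq_self (fun y => (Icc L R).indicator (fun r => (r ^ 3)⁻¹) ‖y‖),
    integral_indicator_Icc_inv_pow_three_norm hL hLR,
    integral_indicator measurableSet_Icc, Pi.one_def, setIntegral_const,
    volume_real_Icc_of_le (by linarith), smul_eq_mul, mul_one]
  ring

lemma abs_kernel_le_shellKernel (hL : 0 < L) (x3 : ℝ) {z : E3} (hz : ‖x - proj z‖ ∈ Icc L R)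
    (hz2 : z 2 ∈ Icc (-M) M) :
    |(x 0 - z 0) * (x3 - z 2) / ‖bar3 x x3 - z‖ ^ 5| ≤ shellKernel x M L R z := by
  have hpos : 0 < ‖x - proj z‖ := hL.trans_le hz.1
  calc _ ≤ (‖bar3 x x3 - z‖ ^ 3)⁻¹ := abs_mul_apply_div_norm_pow_five_le _ 0 2
    _ ≤ (‖x - proj z‖ ^ 3)⁻¹ := by gcongr; exact norm_sub_proj_le_norm_sub_bar3 x x3 z
    _ = shellKernel x M L R z := by
      rw [shellKernel, indicator_of_mem hz2, indicator_of_mem hz, Pi.one_apply, one_mul]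

end shellKernel

/-- **Far-field bound via the divergence theorem.**  There is a universal constant `C` such
that for every `M > 0`, every `C¹` function `f : ℝ² → ℝ` with `-M < f < M` and `∇f ∈ L²`,
every `x̄ = (x,x₃)` with `|x₃| ≤ M` and all `0 < L < R`, the integral of the kernel
`(x₁-y₁)(x₃-y₃)/|x̄-ȳ|⁵` over `U = {ȳ : L ≤ |x-y| ≤ R, f(y) ≤ y₃ ≤ M}` is bounded by
`C (‖∂₁f‖_{L²}/L + M/L + M/R)`. -/
theorem far_field_divergence_bound :
    ∃ C : ℝ, 0 < C ∧ ∀ (M : ℝ) (f : E2 → ℝ), 0 < M → ContDiff ℝ 1 f →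
      (∀ y, -M < f y ∧ f y < M) →
      MemLp (fun y => gradient f y) 2 volume →
      ∀ (x : E2) (x3 : ℝ), |x3| ≤ M → ∀ L R : ℝ, 0 < L → L < R →
        |∫ z in {z : E3 | L ≤ ‖x - proj z‖ ∧ ‖x - proj z‖ ≤ R ∧
              f (proj z) ≤ z 2 ∧ z 2 ≤ M},
            (x 0 - z 0) * (x3 - z 2) / ‖bar3 x x3 - z‖ ^ 5| ≤
          C * (l2norm (fun y => gradient f y 0) / L + M / L + M / R) := by
  refine ⟨4 * π, by positivity, fun M f hM hf hfb _ x x3 _ L R hL hLR => ?_⟩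
  have hU := isClosed_setOf_annulus_above_graph hf.continuous x L R M
  have hbound : ∀ z ∈ {z : E3 | L ≤ ‖x - proj z‖ ∧ ‖x - proj z‖ ≤ R ∧ f (proj z) ≤ z 2 ∧ z 2 ≤ M},
      |(x 0 - z 0) * (x3 - z 2) / ‖bar3 x x3 - z‖ ^ 5| ≤ shellKernel x M L R z :=
    fun z ⟨hLz, hRz, hfz, hMz⟩ =>
      abs_kernel_le_shellKernel hL x3 ⟨hLz, hRz⟩ ⟨(hfb _).1.le.trans hfz, hMz⟩
  have hl2 : 0 ≤ l2norm fun y => gradient f y 0 :=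
    rpow_nonneg (integral_nonneg fun y => sq_nonneg _) _
  rw [← Real.norm_eq_abs]
  calc _ ≤ ∫ z in _, shellKernel x M L R z :=
        norm_integral_le_of_norm_le (integrable_shellKernel hL).integrableOn
          ((ae_restrict_iff' hU.measurableSet).2 (.of_forall hbound))
    _ ≤ ∫ z, shellKernel x M L R z :=
        setIntegral_le_integral (integrable_shellKernel hL) (.of_forall (shellKernel_nonneg hL.le))
    _ = 4 * π * (M / L) - 4 * π * (M / R) := by rw [integral_shellKernel hM.le hL hLR.le]; ring
    _ ≤ _ := by nlinarith [pi_pos, div_nonneg hl2 hL.le, div_nonneg hM.le (hL.trans hLR).le]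
end
end

section
/- Pointwise bound for the short-range self-interaction velocity: Let $f : \mathbb{R}^2 \to \mathbb{R}$ be twice differentiable with bounded second derivatives. Then there is a universal constant $C$ such that for every $x \in \mathbb{R}^2$, $\int_{\{y : |y| < 1\}} \frac{|(\nabla f(x) - \nabla f(x-y)) \cdot y|}{[|y|^2 + (f(x) - f(x-y))^2]^{3/2}}\, dy \le C\, \sup_x |\nabla^2 f(x)|$. -/
open MeasureTheory Filter Topology Real Set
open scoped RealInnerProductSpace ENNReal

noncomputable section

/-
The gradient is `M`-Lipschitz with `M = sup ‖∇²f‖`, so the numerator is at most `M ‖y‖²`, while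
the denominator is at least `‖y‖³`. The integrand is therefore dominated by `M ‖y‖⁻¹`, which is
integrable on the unit disc because the singularity `‖y‖⁻¹` is weaker than `‖y‖⁻²` in the plane.
-/

lemma integrableOn_inv_norm_ball {E : Type*} [NormedAddCommGroup E] [NormedSpace ℝ E]
    [FiniteDimensional ℝ E] [MeasurableSpace E] [BorelSpace E] {μ : Measure E}
    [μ.IsAddHaarMeasure] (hd : 2 ≤ Module.finrank ℝ E) (r : ℝ) :
    IntegrableOn (fun y : E => ‖y‖⁻¹) (Metric.ball 0 r) μ := by
  refine integrableOn_ball_of_norm_le_rpow (C := 1) (α := 1) (by omega) (by exact_mod_cast hd)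
    (Eventually.of_forall fun y => ?_) (by fun_prop)
  simp [Real.rpow_neg_one]

lemma pow_three_le_rpow_three_halves {a : ℝ} (ha : 0 ≤ a) (t : ℝ) :
    a ^ 3 ≤ (a ^ 2 + t ^ 2) ^ (3 / 2 : ℝ) :=
  calc a ^ 3 = (a ^ 2) ^ (3 / 2 : ℝ) := by
        rw [← Real.rpow_natCast a 2, ← Real.rpow_mul ha]; norm_num
    _ ≤ (a ^ 2 + t ^ 2) ^ (3 / 2 : ℝ) := by gcongr; exact le_add_of_nonneg_right (sq_nonneg t)

lemma abs_inner_div_rpow_three_halves_le {F : Type*} [NormedAddCommGroup F]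
    [InnerProductSpace ℝ F] {u y : F} {M : ℝ} (hu : ‖u‖ ≤ M * ‖y‖) (t : ℝ) :
    |⟪u, y⟫| / (‖y‖ ^ 2 + t ^ 2) ^ (3 / 2 : ℝ) ≤ M * ‖y‖⁻¹ := by
  rcases eq_or_ne y 0 with rfl | hy0
  · simp
  have hy : 0 < ‖y‖ := norm_pos_iff.mpr hy0
  have hnum : |⟪u, y⟫| ≤ M * ‖y‖ ^ 2 :=
    calc |⟪u, y⟫| ≤ ‖u‖ * ‖y‖ := abs_real_inner_le_norm u y
      _ ≤ M * ‖y‖ * ‖y‖ := by gcongr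
      _ = M * ‖y‖ ^ 2 := by ring
  calc |⟪u, y⟫| / (‖y‖ ^ 2 + t ^ 2) ^ (3 / 2 : ℝ) ≤ M * ‖y‖ ^ 2 / ‖y‖ ^ 3 :=
        div_le_div₀ ((abs_nonneg _).trans hnum) hnum (by positivity)
          (pow_three_le_rpow_three_halves hy.le t)
    _ = M * ‖y‖⁻¹ := by field_simp

/-- **Pointwise bound for the short-range self-interaction velocity.**  There is a universal
constant `C` such that for every twice differentiable `f : ℝ² → ℝ` with bounded second
derivative and every `x`,
`∫_{|y|<1} |(∇f(x)-∇f(x-y))⬝y| / [|y|²+(f(x)-f(x-y))²]^{3/2} dy ≤ C sup|∇²f|`. -/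
theorem short_range_pointwise_velocity_bound :
    ∃ C : ℝ, 0 < C ∧ ∀ f : E2 → ℝ,
      Differentiable ℝ f → Differentiable ℝ (fun x => gradient f x) →
      BddAbove (Set.range fun x => ‖fderiv ℝ (fun x => gradient f x) x‖) →
      ∀ x : E2,
        (∫⁻ y in Metric.ball (0 : E2) 1, ENNReal.ofReal
            (|⟪gradient f x - gradient f (x - y), y⟫| /
              (‖y‖ ^ 2 + (f x - f (x - y)) ^ 2) ^ (3 / 2 : ℝ))) ≤
          ENNReal.ofReal (C * ⨆ x : E2, ‖fderiv ℝ (fun x => gradient f x) x‖) := by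
  have hint : IntegrableOn (fun y : E2 => ‖y‖⁻¹) (Metric.ball 0 1) :=
    integrableOn_inv_norm_ball (by simp) 1
  set I := ∫ y in Metric.ball (0 : E2) 1, ‖y‖⁻¹
  have hI : 0 ≤ I := setIntegral_nonneg measurableSet_ball fun y _ => by positivity
  refine ⟨1 + I, by positivity, fun f _ hgrad hbdd x => ?_⟩
  set M := ⨆ x : E2, ‖fderiv ℝ (fun x => gradient f x) x‖
  have hM : ∀ z, ‖fderiv ℝ (fun x => gradient f x) z‖ ≤ M := le_ciSup hbdd
  have hM0 : 0 ≤ M := (norm_nonneg _).trans (hM x)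
  have hlip (y : E2) : ‖gradient f x - gradient f (x - y)‖ ≤ M * ‖y‖ := by
    simpa using convex_univ.norm_image_sub_le_of_norm_fderiv_le (fun z _ => hgrad z)
      (fun z _ => hM z) (mem_univ (x - y)) (mem_univ x)
  calc _ ≤ ∫⁻ y in Metric.ball (0 : E2) 1, ENNReal.ofReal (M * ‖y‖⁻¹) :=
        lintegral_mono fun y => ENNReal.ofReal_le_ofReal
          (abs_inner_div_rpow_three_halves_le (hlip y) _)
    _ = ENNReal.ofReal (M * I) := by
        rw [← integral_const_mul, ofReal_integral_eq_lintegral_ofReal (hint.const_mul M)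
          (Eventually.of_forall fun y => by positivity)]
    _ ≤ ENNReal.ofReal ((1 + I) * M) := ENNReal.ofReal_le_ofReal (by nlinarith)
end
end

section
/- Pointwise bound for the long-range odd part: Let $C_\infty \in \mathbb{R}$ and let $f : \mathbb{R}^2 \to \mathbb{R}$ be differentiable with $\nabla f$ and $f - C_\infty$ bounded. Then for every $x \in \mathbb{R}^2$ the principal value $J_8(x) = \nabla f(x) \cdot \lim_{R \to \infty} \int_{\{1 < |y| < R\}} \frac{y}{[|y|^2 + (f(x) - f(x-y))^2]^{3/2}}\, dy$ exists and there is a universal constant $C$ with $|J_8(x)| \le C\, \sup_x|\nabla f(x)| \, \|f - C_\infty\|_{L^\infty}$. -/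
/-! The odd kernel `y / |y|³` integrates to zero over every annulus `1 < |y| < R`, so only the
difference between it and the kernel of `J₈` matters. With `t = f(x) - f(x - y)` one has
`|y| ≤ √(|y|² + t²) ≤ |y| + |t|`, so this difference is at most `3|t| / |y|³`, and
`|t| ≤ 2‖f - C∞‖_∞`. As `|y|⁻³` is integrable on `|y| > 1` in the plane, the truncated integrals
converge to the integral of the difference, of norm at most `6 ‖f - C∞‖_∞ ∫_{|y|>1} |y|⁻³`. -/

open MeasureTheory Filter Topology Real Set
open scoped RealInnerProductSpace

noncomputable section

lemma inv_pow_three_sub_inv_pow_three_le {p q t : ℝ} (hp : 0 < p) (hpq : p ≤ q)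
    (hqt : q ≤ p + t) : (p ^ 3)⁻¹ - (q ^ 3)⁻¹ ≤ 3 * t / p ^ 4 := by
  have hq : 0 < q := hp.trans_le hpq
  have hcube : q ^ 3 - p ^ 3 ≤ 3 * t * q ^ 2 := by
    calc q ^ 3 - p ^ 3 = (q - p) * (q ^ 2 + q * p + p ^ 2) := by ring
      _ ≤ t * (3 * q ^ 2) := by gcongr <;> nlinarith
      _ = 3 * t * q ^ 2 := by ring
  calc (p ^ 3)⁻¹ - (q ^ 3)⁻¹ = (q ^ 3 - p ^ 3) / (p ^ 3 * q ^ 3) := by field_simp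
    _ ≤ 3 * t * q ^ 2 / (p ^ 3 * q ^ 3) := by gcongr
    _ = 3 * t / (p ^ 3 * q) := by field_simp
    _ ≤ 3 * t / p ^ 4 := by
      have : 0 ≤ t := by linarith
      rw [show p ^ 4 = p ^ 3 * p by ring]
      gcongr

lemma rpow_neg_three_halves {a : ℝ} (ha : 0 ≤ a) : a ^ (-(3 / 2) : ℝ) = (√a ^ 3)⁻¹ := by
  rw [Real.sqrt_eq_rpow, ← Real.rpow_natCast, ← Real.rpow_mul ha, ← Real.rpow_neg ha]
  norm_num

lemma Function.Odd.setIntegral_eq_zero {G F : Type*} [AddGroup G] [MeasurableSpace G]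
    [MeasurableNeg G] [NormedAddCommGroup F] [NormedSpace ℝ F] {μ : Measure G} [μ.IsNegInvariant]
    {s : Set G} (hs : MeasurableSet s) (hs_neg : -s = s) {f : G → F} (hf : f.Odd) :
    ∫ y in s, f y ∂μ = 0 := by
  have h_odd : (s.indicator f).Odd := by
    intro y
    have hy : -y ∈ s ↔ y ∈ s := by rw [← Set.mem_neg, hs_neg]
    by_cases hys : y ∈ s
    · rw [indicator_of_mem (hy.mpr hys), indicator_of_mem hys, hf]
    · rw [indicator_of_notMem (hy.not.mpr hys), indicator_of_notMem hys, neg_zero]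
  have h := integral_neg_eq_self (s.indicator f) μ
  rw [funext h_odd, integral_neg] at h
  have := IsAddTorsionFree.of_isTorsionFree ℝ F
  rw [← integral_indicator hs]
  exact neg_eq_self.mp h

section Annulus

variable {E F : Type*} [NormedAddCommGroup E] [MeasurableSpace E] [OpensMeasurableSpace E]
  [NormedAddCommGroup F] [NormedSpace ℝ F] {μ : Measure E}

lemma tendsto_setIntegral_annulus {D : E → F} (hD : IntegrableOn D {y | 1 < ‖y‖} μ) :
    Tendsto (fun R : ℝ => ∫ y in {y | 1 < ‖y‖ ∧ ‖y‖ < R}, D y ∂μ) atTop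
      (𝓝 (∫ y in {y | 1 < ‖y‖}, D y ∂μ)) := by
  have h_union : (⋃ R : ℝ, {y : E | 1 < ‖y‖ ∧ ‖y‖ < R}) = {y | 1 < ‖y‖} := by
    ext y
    simpa using fun _ : 1 < ‖y‖ => exists_gt ‖y‖
  have h_mono : Monotone fun R : ℝ => {y : E | 1 < ‖y‖ ∧ ‖y‖ < R} :=
    fun R R' hR y hy => ⟨hy.1, hy.2.trans_le hR⟩
  rw [← h_union] at hD ⊢
  exact tendsto_setIntegral_of_monotone
    (fun R => measurableSet_lt measurable_const measurable_norm |>.inter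
      (measurableSet_lt measurable_norm measurable_const)) h_mono hD

lemma tendsto_setIntegral_annulus_of_sub_odd [MeasurableNeg E] [μ.IsNegInvariant] {K K₀ : E → F}
    (hK₀ : K₀.Odd) (hK₀_int : ∀ R : ℝ, IntegrableOn K₀ {y | 1 < ‖y‖ ∧ ‖y‖ < R} μ)
    (hD : IntegrableOn (fun y => K y - K₀ y) {y | 1 < ‖y‖} μ) :
    Tendsto (fun R : ℝ => ∫ y in {y | 1 < ‖y‖ ∧ ‖y‖ < R}, K y ∂μ) atTop
      (𝓝 (∫ y in {y | 1 < ‖y‖}, K y - K₀ y ∂μ)) := by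
  refine (tendsto_setIntegral_annulus hD).congr fun R => ?_
  have hs : MeasurableSet {y : E | 1 < ‖y‖ ∧ ‖y‖ < R} :=
    (measurableSet_lt measurable_const measurable_norm).inter
      (measurableSet_lt measurable_norm measurable_const)
  have hs_neg : -{y : E | 1 < ‖y‖ ∧ ‖y‖ < R} = {y | 1 < ‖y‖ ∧ ‖y‖ < R} := by
    ext y; simp
  have h_odd : ∫ y in {y | 1 < ‖y‖ ∧ ‖y‖ < R}, K₀ y ∂μ = 0 :=
    hK₀.setIntegral_eq_zero hs hs_neg
  have hK : IntegrableOn K {y | 1 < ‖y‖ ∧ ‖y‖ < R} μ := by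
    simpa [Pi.add_def] using (hD.mono_set fun y hy => hy.1).add (hK₀_int R)
  rw [integral_sub hK (hK₀_int R), h_odd, sub_zero]

end Annulus

section Kernel

variable {E : Type*} [NormedAddCommGroup E] [NormedSpace ℝ E]

lemma norm_rpow_smul_sub_inv_pow_smul_le {y : E} (hy : y ≠ 0) {t A : ℝ} (ht : |t| ≤ A) :
    ‖(‖y‖ ^ 2 + t ^ 2) ^ (-(3 / 2) : ℝ) • y - (‖y‖ ^ 3)⁻¹ • y‖ ≤ 3 * A * (‖y‖ ^ 3)⁻¹ := by
  set q := √(‖y‖ ^ 2 + t ^ 2)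
  have hy0 : 0 < ‖y‖ := norm_pos_iff.mpr hy
  have hyq : ‖y‖ ≤ q := Real.le_sqrt_of_sq_le (by nlinarith)
  have hqt : q ≤ ‖y‖ + |t| :=
    (Real.sqrt_le_left (by positivity)).mpr (by nlinarith [sq_abs t, abs_nonneg t])
  have hqy : (q ^ 3)⁻¹ ≤ (‖y‖ ^ 3)⁻¹ := by gcongr
  rw [rpow_neg_three_halves (by positivity), ← sub_smul, norm_smul, Real.norm_eq_abs,
    abs_of_nonpos (sub_nonpos.mpr hqy), neg_sub]
  calc ((‖y‖ ^ 3)⁻¹ - (q ^ 3)⁻¹) * ‖y‖ ≤ 3 * |t| / ‖y‖ ^ 4 * ‖y‖ := by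
        gcongr; exact inv_pow_three_sub_inv_pow_three_le hy0 hyq hqt
    _ = 3 * |t| * (‖y‖ ^ 3)⁻¹ := by field_simp
    _ ≤ 3 * A * (‖y‖ ^ 3)⁻¹ := by gcongr

variable [FiniteDimensional ℝ E] [MeasurableSpace E] [BorelSpace E] {μ : Measure E}
  [μ.IsAddHaarMeasure]

lemma integrableOn_inv_norm_pow {n : ℕ} (hn : Module.finrank ℝ E < n) :
    IntegrableOn (fun y : E => (‖y‖ ^ n)⁻¹) {y | 1 < ‖y‖} μ := by
  have hg : Integrable (fun y : E => 2 ^ n * (1 + ‖y‖) ^ (-(n : ℝ))) μ :=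
    (integrable_one_add_norm (by exact_mod_cast hn)).const_mul _
  refine hg.integrableOn.mono' (by fun_prop) ?_
  filter_upwards [ae_restrict_mem (measurableSet_lt measurable_const measurable_norm)]
    with y (hy : 1 < ‖y‖)
  rw [Real.norm_of_nonneg (by positivity)]
  calc (‖y‖ ^ n)⁻¹ ≤ (((1 + ‖y‖) / 2) ^ n)⁻¹ := by gcongr; linarith
    _ = 2 ^ n * (1 + ‖y‖) ^ (-(n : ℝ)) := by
      rw [Real.rpow_neg (by positivity), Real.rpow_natCast, div_pow]
      field_simp

lemma integrableOn_inv_norm_pow_smul_annulus (n : ℕ) (R : ℝ) :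
    IntegrableOn (fun y : E => (‖y‖ ^ n)⁻¹ • y) {y | 1 < ‖y‖ ∧ ‖y‖ < R} μ := by
  have hK : IsCompact {y : E | 1 ≤ ‖y‖ ∧ ‖y‖ ≤ R} :=
    (isCompact_closedBall 0 R).of_isClosed_subset
      ((isClosed_le continuous_const continuous_norm).inter
        (isClosed_le continuous_norm continuous_const))
      fun y hy => mem_closedBall_zero_iff.mpr hy.2
  have hcont : ContinuousOn (fun y : E => (‖y‖ ^ n)⁻¹ • y) {y | 1 ≤ ‖y‖ ∧ ‖y‖ ≤ R} :=
    ((continuous_norm.pow n).continuousOn.inv₀ fun y hy =>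
      pow_ne_zero n (one_pos.trans_le hy.1).ne').smul continuousOn_id
  exact (hcont.integrableOn_compact hK).mono_set fun y hy => ⟨hy.1.le, hy.2.le⟩

lemma norm_setIntegral_rpow_smul_sub_inv_pow_smul_le (hE : Module.finrank ℝ E < 3) {g : E → ℝ}
    {A : ℝ} (hA : ∀ y, |g y| ≤ A) :
    ‖∫ y in {y | 1 < ‖y‖}, (‖y‖ ^ 2 + g y ^ 2) ^ (-(3 / 2) : ℝ) • y - (‖y‖ ^ 3)⁻¹ • y ∂μ‖ ≤
      3 * A * ∫ y in {y | 1 < ‖y‖}, (‖y‖ ^ 3)⁻¹ ∂μ := by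
  rw [← integral_const_mul]
  refine norm_integral_le_of_norm_le ((integrableOn_inv_norm_pow hE).const_mul _) ?_
  refine ae_restrict_of_forall_mem (measurableSet_lt measurable_const measurable_norm) ?_
  exact fun y (hy : 1 < ‖y‖) =>
    norm_rpow_smul_sub_inv_pow_smul_le (norm_pos_iff.mp (one_pos.trans hy)) (hA y)

lemma integrableOn_rpow_smul_sub_inv_pow_smul (hE : Module.finrank ℝ E < 3) {g : E → ℝ}
    (hg : Measurable g) {A : ℝ} (hA : ∀ y, |g y| ≤ A) :
    IntegrableOn (fun y => (‖y‖ ^ 2 + g y ^ 2) ^ (-(3 / 2) : ℝ) • y - (‖y‖ ^ 3)⁻¹ • y)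
      {y | 1 < ‖y‖} μ := by
  refine ((integrableOn_inv_norm_pow hE).const_mul (3 * A)).mono' (by fun_prop) ?_
  refine ae_restrict_of_forall_mem (measurableSet_lt measurable_const measurable_norm) ?_
  exact fun y (hy : 1 < ‖y‖) =>
    norm_rpow_smul_sub_inv_pow_smul_le (norm_pos_iff.mp (one_pos.trans hy)) (hA y)

end Kernel

/-- **Pointwise bound for the long-range odd part.**  There is a universal constant `C` such
that for every differentiable `f : ℝ² → ℝ` with `∇f` and `f - C∞` bounded and every `x`, the
principal value
`J₈(x) = ∇f(x) ⬝ lim_{R→∞} ∫_{1<|y|<R} y / [|y|²+(f(x)-f(x-y))²]^{3/2} dy`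
exists and `|J₈(x)| ≤ C sup|∇f| ‖f-C∞‖_∞`. -/
theorem long_range_odd_part_bound :
    ∃ C : ℝ, 0 < C ∧ ∀ (Cinf : ℝ) (f : E2 → ℝ),
      Differentiable ℝ f →
      BddAbove (Set.range fun x => ‖gradient f x‖) →
      BddAbove (Set.range fun x => |f x - Cinf|) →
      ∀ x : E2, ∃ v : E2,
        Tendsto (fun R : ℝ => ∫ y in {y : E2 | 1 < ‖y‖ ∧ ‖y‖ < R},
            ((‖y‖ ^ 2 + (f x - f (x - y)) ^ 2) ^ (-(3 / 2) : ℝ)) • y)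
          atTop (𝓝 v) ∧
        |⟪gradient f x, v⟫| ≤
          C * (⨆ x : E2, ‖gradient f x‖) * (⨆ x : E2, |f x - Cinf|) := by
  set I := ∫ y in {y : E2 | 1 < ‖y‖}, (‖y‖ ^ 3)⁻¹
  have hE : Module.finrank ℝ E2 < 3 := by simp
  have hI : 0 ≤ I :=
    setIntegral_nonneg (measurableSet_lt measurable_const measurable_norm) fun y _ => by positivity
  refine ⟨6 * I + 1, by positivity, fun Cinf f hf hbg hbf x => ?_⟩
  set L := ⨆ z, ‖gradient f z‖
  set M := ⨆ z, |f z - Cinf|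
  have hL : ∀ z, ‖gradient f z‖ ≤ L := le_ciSup hbg
  have hM : ∀ z, |f z - Cinf| ≤ M := le_ciSup hbf
  have hosc : ∀ y, |f x - f (x - y)| ≤ 2 * M := fun y => by
    have := abs_sub_le (f x) Cinf (f (x - y))
    rw [abs_sub_comm Cinf] at this
    linarith [hM x, hM (x - y)]
  have hg : Measurable fun y => f x - f (x - y) := by
    have := hf.continuous.measurable
    fun_prop
  refine ⟨_, tendsto_setIntegral_annulus_of_sub_odd (K₀ := fun y : E2 => (‖y‖ ^ 3)⁻¹ • y)
    (fun y => by simp) (integrableOn_inv_norm_pow_smul_annulus 3)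
    (integrableOn_rpow_smul_sub_inv_pow_smul hE hg hosc), ?_⟩
  have hLM : 0 ≤ L * M := mul_nonneg ((norm_nonneg _).trans (hL x)) ((abs_nonneg _).trans (hM x))
  calc |⟪gradient f x, _⟫| ≤ ‖gradient f x‖ * ‖_‖ := abs_real_inner_le_norm _ _
    _ ≤ L * (3 * (2 * M) * I) :=
      mul_le_mul (hL x) (norm_setIntegral_rpow_smul_sub_inv_pow_smul_le hE hosc) (norm_nonneg _)
        ((norm_nonneg _).trans (hL x))
    _ ≤ (6 * I + 1) * L * M := by nlinarith
end
end

section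
/- Pointwise bound for the long-range convolution part: Let $C_\infty \in \mathbb{R}$ and let $f : \mathbb{R}^2 \to \mathbb{R}$ be differentiable with $\nabla f$ and $f - C_\infty$ bounded. Then for every $x \in \mathbb{R}^2$ the principal value $J_9(x) = -\lim_{R \to \infty} \int_{\{1 < |y| < R\}} \frac{\nabla f(x-y) \cdot y}{[|y|^2 + (f(x) - f(x-y))^2]^{3/2}}\, dy$ exists and there is a universal constant $C$ with $|J_9(x)| \le C\, \big(\sup_x|\nabla f(x)| + 1\big) \, \|f - C_\infty\|_{L^\infty}$. -/
/-! In polar coordinates `y = r ω` the integrand times `r` becomes `V(r) φ'(r)`, where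
`φ(r) = f x - f (x - r ω)` and `V(r) = r² / (r² + φ(r)²)^{3/2}`. Integrating by parts against
`u(r) = C∞ - f (x - r ω) = φ(r) - (f x - C∞)`, which is bounded by `‖f - C∞‖_∞`, moves the
derivative onto `V`. Since `0 ≤ V ≤ 1/r` and `|V'| ≤ (5 + 3 sup |∇f|) / r²`, the boundary terms are
bounded and vanish at infinity while the remaining integral converges absolutely. So every ray
integral converges and is bounded by `(7 + 3 sup |∇f|) ‖f - C∞‖_∞` uniformly in the direction, and
dominated convergence in the angle gives the principal value with `C = 14π`. -/

open MeasureTheory Filter Topology Real Set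
open scoped RealInnerProductSpace

noncomputable section

section RayWeight

variable {φ φ' : ℝ → ℝ} {r L : ℝ}

-- For `φ r = f x - f (x - r • ω)` with `‖ω‖ = 1`, this is the length of the chord of the graph
-- of `f` between the points over `x` and `x - r • ω`.
def chordLength (φ : ℝ → ℝ) (r : ℝ) : ℝ := √(r ^ 2 + φ r ^ 2)

def rayWeight (φ : ℝ → ℝ) (r : ℝ) : ℝ := r ^ 2 / chordLength φ r ^ 3

def rayWeightDeriv (φ φ' : ℝ → ℝ) (r : ℝ) : ℝ :=
  (2 * r * chordLength φ r ^ 2 - 3 * r ^ 2 * (r + φ r * φ' r)) / chordLength φ r ^ 5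

lemma le_chordLength : r ≤ chordLength φ r :=
  Real.le_sqrt_of_sq_le (le_add_of_nonneg_right (sq_nonneg _))

lemma abs_le_chordLength : |φ r| ≤ chordLength φ r :=
  Real.abs_le_sqrt (le_add_of_nonneg_left (sq_nonneg _))

lemma chordLength_pos (hr : 0 < r) : 0 < chordLength φ r := hr.trans_le le_chordLength

lemma rayWeight_nonneg : 0 ≤ rayWeight φ r := by
  unfold rayWeight chordLength; positivity

lemma rayWeight_le_inv (hr : 0 < r) : rayWeight φ r ≤ r⁻¹ := by
  calc rayWeight φ r ≤ r ^ 2 / r ^ 3 := by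
        unfold rayWeight; gcongr; exact le_chordLength
    _ = r⁻¹ := by field_simp

lemma hasDerivAt_rayWeight (hφ : HasDerivAt φ (φ' r) r) (hr : 0 < r) :
    HasDerivAt (rayWeight φ) (rayWeightDeriv φ φ' r) r := by
  have hq : 0 < chordLength φ r := chordLength_pos hr
  have hD : HasDerivAt (fun s => s ^ 2 + φ s ^ 2) (2 * r + 2 * φ r * φ' r) r := by
    simpa using (hasDerivAt_pow 2 r).fun_add (hφ.fun_pow 2)
  have hQ : HasDerivAt (chordLength φ) ((2 * r + 2 * φ r * φ' r) / (2 * chordLength φ r)) r :=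
    hD.sqrt (by positivity)
  refine ((hasDerivAt_pow 2 r).fun_div (hQ.fun_pow 3) (pow_pos hq 3).ne').congr_deriv ?_
  rw [rayWeightDeriv]
  field_simp
  ring

lemma abs_rayWeightDeriv_le (hr : 0 < r) (hL : |φ' r| ≤ L) :
    |rayWeightDeriv φ φ' r| ≤ (5 + 3 * L) / r ^ 2 := by
  set q := chordLength φ r
  have hq : 0 < q := chordLength_pos hr
  have hrq : r ≤ q := le_chordLength
  have hφq : |φ r| ≤ q := abs_le_chordLength
  have hL0 : 0 ≤ L := (abs_nonneg _).trans hL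
  have hsum : |r + φ r * φ' r| ≤ q * (1 + L) :=
    calc |r + φ r * φ' r| ≤ |r| + |φ r| * |φ' r| := (abs_add_le _ _).trans_eq (by rw [abs_mul])
      _ ≤ q + q * L := by rw [abs_of_pos hr]; gcongr
      _ = q * (1 + L) := by ring
  have hnum : |2 * r * q ^ 2 - 3 * r ^ 2 * (r + φ r * φ' r)| ≤ (5 + 3 * L) * q ^ 3 :=
    calc |2 * r * q ^ 2 - 3 * r ^ 2 * (r + φ r * φ' r)|
        ≤ 2 * r * q ^ 2 + 3 * r ^ 2 * |r + φ r * φ' r| := by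
          refine (abs_sub _ _).trans_eq ?_
          rw [abs_of_pos (by positivity : 0 < 2 * r * q ^ 2), abs_mul,
            abs_of_pos (by positivity : (0 : ℝ) < 3 * r ^ 2)]
      _ ≤ 2 * q * q ^ 2 + 3 * q ^ 2 * (q * (1 + L)) := by gcongr
      _ = (5 + 3 * L) * q ^ 3 := by ring
  calc |rayWeightDeriv φ φ' r| ≤ (5 + 3 * L) * q ^ 3 / q ^ 5 := by
        rw [rayWeightDeriv, abs_div, abs_of_pos (by positivity : 0 < q ^ 5)]; gcongr
    _ = (5 + 3 * L) / q ^ 2 := by field_simp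
    _ ≤ (5 + 3 * L) / r ^ 2 := by gcongr

end RayWeight

lemma rpow_three_halves_eq_sqrt_pow {t : ℝ} (ht : 0 ≤ t) : t ^ (3 / 2 : ℝ) = √t ^ 3 := by
  rw [Real.sqrt_eq_rpow, ← Real.rpow_mul_natCast ht]; norm_num

lemma integrableOn_Ioi_inv_sq {a : ℝ} (ha : 0 < a) :
    IntegrableOn (fun r : ℝ => (r ^ 2)⁻¹) (Ioi a) :=
  (integrableOn_Ioi_rpow_of_lt (by norm_num : (-2 : ℝ) < -1) ha).congr_fun
    (fun r hr => by simp [Real.rpow_neg (ha.trans hr).le]) measurableSet_Ioi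

lemma integral_Ioi_inv_sq {a : ℝ} (ha : 0 < a) : ∫ r in Ioi a, (r ^ 2)⁻¹ = a⁻¹ := by
  calc ∫ r in Ioi a, (r ^ 2)⁻¹ = ∫ r in Ioi a, r ^ (-2 : ℝ) :=
        setIntegral_congr_fun measurableSet_Ioi fun r hr => by
          simp [Real.rpow_neg (ha.trans hr).le]
    _ = a⁻¹ := by
        rw [integral_Ioi_rpow_of_lt (by norm_num) ha]; norm_num [Real.rpow_neg_one]

section RayIntegral

variable {φ φ' : ℝ → ℝ} {c L M : ℝ}

lemma measurable_of_hasDerivAt (hφ : ∀ r, HasDerivAt φ (φ' r) r) : Measurable φ' := by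
  rw [show φ' = deriv φ from funext fun r => (hφ r).deriv.symm]
  exact measurable_deriv φ

lemma measurable_rayWeightDeriv (hφ : ∀ r, HasDerivAt φ (φ' r) r) :
    Measurable (rayWeightDeriv φ φ') := by
  have hφc : Continuous φ := continuous_iff_continuousAt.2 fun r => (hφ r).continuousAt
  have hφ' := measurable_of_hasDerivAt hφ
  unfold rayWeightDeriv chordLength
  fun_prop

lemma integrableOn_rayWeightDeriv (hφ : ∀ r, HasDerivAt φ (φ' r) r) (hL : ∀ r, |φ' r| ≤ L)
    {a : ℝ} (ha : 0 < a) : IntegrableOn (rayWeightDeriv φ φ') (Ioi a) := by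
  refine ((integrableOn_Ioi_inv_sq ha).const_mul (5 + 3 * L)).mono'
    (measurable_rayWeightDeriv hφ).aestronglyMeasurable ?_
  filter_upwards [ae_restrict_mem measurableSet_Ioi] with r hr
  simpa [div_eq_mul_inv] using abs_rayWeightDeriv_le (ha.trans hr) (hL r)

lemma abs_rayWeight_mul_le (hM : ∀ r, |φ r - c| ≤ M) {r : ℝ} (hr : 0 < r) :
    |rayWeight φ r * (φ r - c)| ≤ r⁻¹ * M := by
  rw [abs_mul, abs_of_nonneg rayWeight_nonneg]
  exact mul_le_mul (rayWeight_le_inv hr) (hM r) (abs_nonneg _) (inv_nonneg.2 hr.le)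

lemma integral_rayWeight_mul_deriv (hφ : ∀ r, HasDerivAt φ (φ' r) r) (hL : ∀ r, |φ' r| ≤ L)
    (c : ℝ) {a b : ℝ} (ha : 0 < a) (hab : a ≤ b) :
    ∫ r in a..b, rayWeight φ r * φ' r =
      rayWeight φ b * (φ b - c) - rayWeight φ a * (φ a - c) -
        ∫ r in a..b, rayWeightDeriv φ φ' r * (φ r - c) :=
  intervalIntegral.integral_mul_deriv_eq_deriv_mul
    (fun r hr => hasDerivAt_rayWeight (hφ r) (ha.trans_le (uIcc_of_le hab ▸ hr).1))
    (fun r _ => (hφ r).sub_const c)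
    ((intervalIntegrable_iff_integrableOn_Ioc_of_le hab).2
      ((integrableOn_rayWeightDeriv hφ hL ha).mono_set Ioc_subset_Ioi_self))
    (intervalIntegrable_const.mono_fun' (measurable_of_hasDerivAt hφ).aestronglyMeasurable
      (ae_of_all _ hL))

lemma integrableOn_rayWeightDeriv_mul (hφ : ∀ r, HasDerivAt φ (φ' r) r) (hL : ∀ r, |φ' r| ≤ L)
    (hM : ∀ r, |φ r - c| ≤ M) {a : ℝ} (ha : 0 < a) :
    IntegrableOn (fun r => rayWeightDeriv φ φ' r * (φ r - c)) (Ioi a) :=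
  (integrableOn_rayWeightDeriv hφ hL ha).mul_bdd
    ((continuous_iff_continuousAt.2 fun r => (hφ r).continuousAt).sub continuous_const
      ).aestronglyMeasurable (ae_of_all _ hM)

lemma abs_integral_rayWeightDeriv_mul_le (hφ : ∀ r, HasDerivAt φ (φ' r) r)
    (hL : ∀ r, |φ' r| ≤ L) (hM : ∀ r, |φ r - c| ≤ M) {R : ℝ} (hR : 1 ≤ R) :
    |∫ r in 1..R, rayWeightDeriv φ φ' r * (φ r - c)| ≤ (5 + 3 * L) * M := by
  have hint := (integrableOn_rayWeightDeriv_mul hφ hL hM one_pos).abs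
  have hL0 : 0 ≤ L := (abs_nonneg _).trans (hL 0)
  calc |∫ r in 1..R, rayWeightDeriv φ φ' r * (φ r - c)|
      ≤ ∫ r in Ioc 1 R, |rayWeightDeriv φ φ' r * (φ r - c)| := by
        rw [← intervalIntegral.integral_of_le hR]
        exact intervalIntegral.abs_integral_le_integral_abs hR
    _ ≤ ∫ r in Ioi 1, |rayWeightDeriv φ φ' r * (φ r - c)| :=
        setIntegral_mono_set hint (ae_of_all _ fun _ => abs_nonneg _)
          Ioc_subset_Ioi_self.eventuallyLE
    _ ≤ ∫ r in Ioi 1, (5 + 3 * L) * M * (r ^ 2)⁻¹ := by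
        refine setIntegral_mono_on hint ((integrableOn_Ioi_inv_sq one_pos).const_mul _)
          measurableSet_Ioi fun r hr => ?_
        rw [abs_mul, mul_right_comm, ← div_eq_mul_inv]
        exact mul_le_mul (abs_rayWeightDeriv_le (one_pos.trans hr) (hL r)) (hM r)
          (abs_nonneg _) (by positivity)
    _ = (5 + 3 * L) * M := by
        rw [integral_const_mul, integral_Ioi_inv_sq one_pos, inv_one, mul_one]

lemma abs_integral_rayWeight_mul_deriv_le (hφ : ∀ r, HasDerivAt φ (φ' r) r)
    (hL : ∀ r, |φ' r| ≤ L) (hM : ∀ r, |φ r - c| ≤ M) {R : ℝ} (hR : 1 ≤ R) :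
    |∫ r in 1..R, rayWeight φ r * φ' r| ≤ (7 + 3 * L) * M := by
  have hM0 : 0 ≤ M := (abs_nonneg _).trans (hM 0)
  have h1 : |rayWeight φ 1 * (φ 1 - c)| ≤ M := by simpa using abs_rayWeight_mul_le hM one_pos
  have hR' : |rayWeight φ R * (φ R - c)| ≤ M :=
    (abs_rayWeight_mul_le hM (one_pos.trans_le hR)).trans
      (mul_le_of_le_one_left hM0 (inv_le_one_of_one_le₀ hR))
  have htail := abs_integral_rayWeightDeriv_mul_le hφ hL hM hR
  rw [integral_rayWeight_mul_deriv hφ hL c one_pos hR]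
  calc _ ≤ |rayWeight φ R * (φ R - c)| + |rayWeight φ 1 * (φ 1 - c)| +
        |∫ r in 1..R, rayWeightDeriv φ φ' r * (φ r - c)| :=
        (abs_sub _ _).trans (add_le_add_left (abs_sub _ _) _)
    _ ≤ (7 + 3 * L) * M := by linarith

lemma tendsto_integral_rayWeight_mul_deriv (hφ : ∀ r, HasDerivAt φ (φ' r) r)
    (hL : ∀ r, |φ' r| ≤ L) (hM : ∀ r, |φ r - c| ≤ M) :
    ∃ ℓ, Tendsto (fun R => ∫ r in 1..R, rayWeight φ r * φ' r) atTop (𝓝 ℓ) := by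
  have hboundary : Tendsto (fun R => rayWeight φ R * (φ R - c)) atTop (𝓝 0) := by
    refine squeeze_zero_norm' ?_ (by simpa using tendsto_inv_atTop_zero.mul_const M)
    filter_upwards [eventually_gt_atTop 0] with R hR using abs_rayWeight_mul_le hM hR
  have htail := intervalIntegral_tendsto_integral_Ioi 1
    (integrableOn_rayWeightDeriv_mul hφ hL hM one_pos) tendsto_id
  refine ⟨_, ((hboundary.sub_const (rayWeight φ 1 * (φ 1 - c))).sub htail).congr' ?_⟩
  filter_upwards [eventually_ge_atTop 1] with R hR
  exact (integral_rayWeight_mul_deriv hφ hL c one_pos hR).symm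

end RayIntegral

section LongRangeIntegrand

variable {E : Type*} [NormedAddCommGroup E] [InnerProductSpace ℝ E] [CompleteSpace E]

lemma measurable_gradient [MeasurableSpace E] [BorelSpace E] (f : E → ℝ) :
    Measurable (gradient f) :=
  (InnerProductSpace.toDual ℝ E).symm.continuous.measurable.comp (measurable_fderiv ℝ f)

def longRangeIntegrand (f : E → ℝ) (x y : E) : ℝ :=
  ⟪gradient f (x - y), y⟫ / (‖y‖ ^ 2 + (f x - f (x - y)) ^ 2) ^ (3 / 2 : ℝ)

lemma measurable_longRangeIntegrand [MeasurableSpace E] [BorelSpace E]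
    [SecondCountableTopology E] {f : E → ℝ} (hf : Continuous f) (x : E) :
    Measurable (longRangeIntegrand f x) := by
  have := measurable_gradient f
  unfold longRangeIntegrand
  fun_prop

variable {f : E → ℝ} {x ω : E}

lemma hasDerivAt_sub_comp_sub_smul {r : ℝ} (hf : DifferentiableAt ℝ f (x - r • ω)) :
    HasDerivAt (fun s : ℝ => f x - f (x - s • ω)) ⟪gradient f (x - r • ω), ω⟫ r := by
  have hline : HasDerivAt (fun s : ℝ => x - s • ω) (-ω) r := by
    simpa using ((hasDerivAt_id r).smul_const ω).const_sub x
  simpa [inner_neg_right] using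
    ((hf.hasGradientAt.hasFDerivAt).comp_hasDerivAt r hline).const_sub (f x)

lemma mul_longRangeIntegrand_smul (hω : ‖ω‖ = 1) (r : ℝ) :
    r * longRangeIntegrand f x (r • ω) =
      rayWeight (fun s => f x - f (x - s • ω)) r * ⟪gradient f (x - r • ω), ω⟫ := by
  rw [longRangeIntegrand, rayWeight, chordLength, norm_smul, hω, mul_one, Real.norm_eq_abs,
    sq_abs, rpow_three_halves_eq_sqrt_pow (by positivity), real_inner_smul_right]
  ring

variable {Cinf L M : ℝ}

lemma abs_inner_gradient_le (hω : ‖ω‖ = 1) (hL : ∀ z, ‖gradient f z‖ ≤ L) (z : E) :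
    |⟪gradient f z, ω⟫| ≤ L :=
  (abs_real_inner_le_norm _ _).trans (by rw [hω, mul_one]; exact hL z)

lemma abs_mul_longRangeIntegrand_smul_le (hω : ‖ω‖ = 1) (hL : ∀ z, ‖gradient f z‖ ≤ L)
    {r : ℝ} (hr : 1 ≤ r) : |r * longRangeIntegrand f x (r • ω)| ≤ L := by
  rw [mul_longRangeIntegrand_smul hω, abs_mul, abs_of_nonneg rayWeight_nonneg]
  calc _ ≤ |⟪gradient f (x - r • ω), ω⟫| := mul_le_of_le_one_left (abs_nonneg _)
        ((rayWeight_le_inv (one_pos.trans_le hr)).trans (inv_le_one_of_one_le₀ hr))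
    _ ≤ L := abs_inner_gradient_le hω hL _

lemma abs_integral_mul_longRangeIntegrand_smul_le (hf : Differentiable ℝ f) (hω : ‖ω‖ = 1)
    (hL : ∀ z, ‖gradient f z‖ ≤ L) (hM : ∀ z, |f z - Cinf| ≤ M) {R : ℝ} (hR : 1 ≤ R) :
    |∫ r in 1..R, r * longRangeIntegrand f x (r • ω)| ≤ (7 + 3 * L) * M := by
  simp_rw [mul_longRangeIntegrand_smul hω]
  exact abs_integral_rayWeight_mul_deriv_le (c := f x - Cinf)
    (fun r => hasDerivAt_sub_comp_sub_smul (hf _)) (fun r => abs_inner_gradient_le hω hL _)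
    (fun r => by rw [sub_sub_sub_cancel_left, abs_sub_comm]; exact hM _) hR

lemma exists_tendsto_integral_mul_longRangeIntegrand_smul (hf : Differentiable ℝ f)
    (hω : ‖ω‖ = 1) (hL : ∀ z, ‖gradient f z‖ ≤ L) (hM : ∀ z, |f z - Cinf| ≤ M) :
    ∃ ℓ, Tendsto (fun R => ∫ r in 1..R, r * longRangeIntegrand f x (r • ω)) atTop (𝓝 ℓ) := by
  simp_rw [mul_longRangeIntegrand_smul hω]
  exact tendsto_integral_rayWeight_mul_deriv (c := f x - Cinf)
    (fun r => hasDerivAt_sub_comp_sub_smul (hf _)) (fun r => abs_inner_gradient_le hω hL _)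
    (fun r => by rw [sub_sub_sub_cancel_left, abs_sub_comm]; exact hM _)

end LongRangeIntegrand

def polarDir (θ : ℝ) : E2 :=
  Complex.orthonormalBasisOneI.repr (Real.cos θ + Real.sin θ * Complex.I)

lemma norm_polarDir (θ : ℝ) : ‖polarDir θ‖ = 1 := by
  rw [polarDir, LinearIsometryEquiv.norm_map, Complex.ofReal_cos, Complex.ofReal_sin,
    Complex.norm_cos_add_sin_mul_I]

lemma continuous_polarDir : Continuous polarDir := by
  unfold polarDir; fun_prop

lemma integral_comp_polarDir {G : Type*} [NormedAddCommGroup G] [NormedSpace ℝ G] (F : E2 → G) :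
    ∫ p in polarCoord.target, p.1 • F (p.1 • polarDir p.2) = ∫ y, F y := by
  rw [← (Complex.orthonormalBasisOneI.repr.measurePreserving).integral_comp
    Complex.orthonormalBasisOneI.repr.toHomeomorph.measurableEmbedding,
    ← Complex.integral_comp_polarCoord_symm]
  congr! with p
  rw [polarDir, ← LinearIsometryEquiv.map_smul, Complex.polarCoord_symm_apply, Complex.real_smul]

lemma setIntegral_annulus_eq_polar {G : Type*} [NormedAddCommGroup G] [NormedSpace ℝ G]
    (F : E2 → G) {a : ℝ} (ha : 0 ≤ a) (b : ℝ) :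
    ∫ y in {y : E2 | a < ‖y‖ ∧ ‖y‖ < b}, F y =
      ∫ p in Ioo a b ×ˢ Ioo (-π) π, p.1 • F (p.1 • polarDir p.2) := by
  have hA : MeasurableSet {y : E2 | a < ‖y‖ ∧ ‖y‖ < b} :=
    measurableSet_Ioo.preimage continuous_norm.measurable
  have htarget : polarCoord.target ∩ Ioo a b ×ˢ univ = Ioo a b ×ˢ Ioo (-π) π := by
    rw [polarCoord_target, prod_inter_prod, inter_univ,
      inter_eq_right.2 (Ioo_subset_Ioi_self.trans (Ioi_subset_Ioi ha))]
  rw [← integral_indicator hA, ← integral_comp_polarDir, ← htarget,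
    ← setIntegral_indicator (measurableSet_Ioo.prod MeasurableSet.univ)]
  refine setIntegral_congr_fun polarCoord.open_target.measurableSet fun p hp => ?_
  have hnorm : ‖p.1 • polarDir p.2‖ = p.1 := by
    rw [norm_smul, norm_polarDir, mul_one, Real.norm_of_nonneg hp.1.le]
  by_cases hmem : p.1 ∈ Ioo a b
  · rw [indicator_of_mem (by simpa [hnorm] using hmem), indicator_of_mem (by simpa using hmem)]
  · rw [indicator_of_notMem (by simpa [hnorm] using hmem),
      indicator_of_notMem (by simpa using hmem), smul_zero]

theorem tendsto_setIntegral_annulus_s18 {F : E2 → ℝ} (hF : Measurable F) {K B : ℝ} {ℓ : ℝ → ℝ}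
    (hK : ∀ θ r, 1 ≤ r → |r * F (r • polarDir θ)| ≤ K)
    (hB : ∀ θ R, 1 ≤ R → |∫ r in 1..R, r * F (r • polarDir θ)| ≤ B)
    (hℓ : ∀ θ, Tendsto (fun R => ∫ r in 1..R, r * F (r • polarDir θ)) atTop (𝓝 (ℓ θ))) :
    Tendsto (fun R => ∫ y in {y : E2 | 1 < ‖y‖ ∧ ‖y‖ < R}, F y) atTop
      (𝓝 (∫ θ in Ioo (-π) π, ℓ θ)) := by
  set H : ℝ × ℝ → ℝ := fun p => p.1 * F (p.1 • polarDir p.2)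
  have hH : Measurable H := by have := continuous_polarDir; fun_prop
  have hray (θ : ℝ) {R : ℝ} (hR : 1 ≤ R) :
      ∫ r in Ioo 1 R, H (r, θ) = ∫ r in 1..R, r * F (r • polarDir θ) := by
    rw [intervalIntegral.integral_of_le hR, integral_Ioc_eq_integral_Ioo]
  have hpolar (R : ℝ) : ∫ y in {y : E2 | 1 < ‖y‖ ∧ ‖y‖ < R}, F y =
      ∫ θ in Ioo (-π) π, ∫ r in Ioo 1 R, H (r, θ) := by
    have hint : IntegrableOn H (Ioo 1 R ×ˢ Ioo (-π) π) := by
      refine Measure.integrableOn_of_bounded ?_ hH.aestronglyMeasurable (M := K) ?_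
      · rw [Measure.volume_eq_prod, Measure.prod_prod]
        exact ENNReal.mul_ne_top measure_Ioo_lt_top.ne measure_Ioo_lt_top.ne
      · filter_upwards [ae_restrict_mem (measurableSet_Ioo.prod measurableSet_Ioo)] with p hp
        exact hK p.2 p.1 hp.1.1.le
    rw [IntegrableOn, Measure.volume_eq_prod, ← Measure.prod_restrict] at hint
    rw [setIntegral_annulus_eq_polar F zero_le_one, Measure.volume_eq_prod,
      ← Measure.prod_restrict]
    exact integral_prod_symm H hint
  refine Tendsto.congr (fun R => (hpolar R).symm) ?_
  refine tendsto_integral_filter_of_dominated_convergence (fun _ => B)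
    (Eventually.of_forall fun R => (hH.stronglyMeasurable.integral_prod_left'
      (μ := volume.restrict (Ioo 1 R))).aestronglyMeasurable) ?_
    (integrableOn_const measure_Ioo_lt_top.ne) (ae_of_all _ fun θ => ?_)
  · filter_upwards [eventually_ge_atTop 1] with R hR
    exact ae_of_all _ fun θ => by rw [Real.norm_eq_abs, hray θ hR]; exact hB θ R hR
  · refine (hℓ θ).congr' ?_
    filter_upwards [eventually_ge_atTop 1] with R hR using (hray θ hR).symm

/-- **Pointwise bound for the long-range convolution part.**  There is a universal constant
`C` such that for every differentiable `f : ℝ² → ℝ` with `∇f` and `f - C∞` bounded and every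
`x`, the principal value
`J₉(x) = -lim_{R→∞} ∫_{1<|y|<R} ∇f(x-y)⬝y / [|y|²+(f(x)-f(x-y))²]^{3/2} dy`
exists and `|J₉(x)| ≤ C (sup|∇f| + 1) ‖f-C∞‖_∞`. -/
theorem long_range_convolution_part_bound :
    ∃ C : ℝ, 0 < C ∧ ∀ (Cinf : ℝ) (f : E2 → ℝ),
      Differentiable ℝ f →
      BddAbove (Set.range fun x => ‖gradient f x‖) →
      BddAbove (Set.range fun x => |f x - Cinf|) →
      ∀ x : E2, ∃ I : ℝ,
        Tendsto (fun R : ℝ => -∫ y in {y : E2 | 1 < ‖y‖ ∧ ‖y‖ < R},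
            ⟪gradient f (x - y), y⟫ / (‖y‖ ^ 2 + (f x - f (x - y)) ^ 2) ^ (3 / 2 : ℝ))
          atTop (𝓝 I) ∧
        |I| ≤ C * ((⨆ x : E2, ‖gradient f x‖) + 1) * (⨆ x : E2, |f x - Cinf|) := by
  refine ⟨14 * π, by positivity, fun Cinf f hf hBL hBM x => ?_⟩
  set L := ⨆ z : E2, ‖gradient f z‖
  set M := ⨆ z : E2, |f z - Cinf|
  have hL (z : E2) : ‖gradient f z‖ ≤ L := le_ciSup hBL z
  have hM (z : E2) : |f z - Cinf| ≤ M := le_ciSup hBM z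
  have hB (θ R : ℝ) (hR : 1 ≤ R) := abs_integral_mul_longRangeIntegrand_smul_le (x := x) hf
    (norm_polarDir θ) hL hM hR
  choose ℓ hℓ using fun θ =>
    exists_tendsto_integral_mul_longRangeIntegrand_smul (x := x) hf (norm_polarDir θ) hL hM
  refine ⟨-∫ θ in Ioo (-π) π, ℓ θ, (tendsto_setIntegral_annulus_s18
    (measurable_longRangeIntegrand hf.continuous x)
    (fun θ r hr => abs_mul_longRangeIntegrand_smul_le (norm_polarDir θ) hL hr) hB hℓ).neg, ?_⟩
  have hℓB (θ : ℝ) : |ℓ θ| ≤ (7 + 3 * L) * M :=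
    le_of_tendsto (continuous_abs.tendsto _ |>.comp (hℓ θ))
      (eventually_ge_atTop 1 |>.mono fun R hR => hB θ R hR)
  have hL0 : 0 ≤ L := (norm_nonneg _).trans (hL x)
  have hM0 : 0 ≤ M := (abs_nonneg _).trans (hM x)
  calc |-∫ θ in Ioo (-π) π, ℓ θ| ≤ (7 + 3 * L) * M * volume.real (Ioo (-π) π) := by
        rw [abs_neg]
        exact norm_setIntegral_le_of_norm_le_const measure_Ioo_lt_top fun θ _ =>
          (Real.norm_eq_abs _).trans_le (hℓB θ)
    _ ≤ 14 * π * (L + 1) * M := by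
        rw [Real.volume_real_Ioo_of_le (by linarith [pi_pos])]
        nlinarith [pi_pos, mul_nonneg hL0 hM0, mul_nonneg (mul_nonneg hL0 hM0) pi_pos.le]
end
end
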